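/- Let Q be a symmetric n×n real matrix, d ∈ ℝⁿ, A ∈ ℝ^{m×n}, b ∈ ℝᵐ, and suppose the feasible region F = {x : Ax ≤ b} is bounded. Let x̂ ∈ F and suppose Q is NOT H_{I_{x̂}}-conditionally positive definite, i.e. there exists a nonzero h ∈ ℝⁿ with a_iᵀh = 0 for all i ∈ I_{x̂} and hᵀQh ≤ 0. Then there exists x̄ ∈ F such that Φ(x̄) ≤ Φ(x̂) and I_{x̂} is a proper subset of I_{x̄}. -/

import Mathlib

/-!
Move from `x̂` along `±h`, the sign chosen so that the slope of `Φ` is nonpositive. Since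
`hᵀQh ≤ 0`, `Φ` does not increase along the whole ray, and the constraints active at `x̂`
stay active because `h` is orthogonal to them. As `F` is bounded, the ray must leave `F`,
so some constraint increases along it; stopping at the first one that becomes tight gives `x̄`.
-/

open Matrix

noncomputable def Phi {n : ℕ} (Q : Matrix (Fin n) (Fin n) ℝ) (d : Fin n → ℝ)
    (x : Fin n → ℝ) : ℝ :=
  x ⬝ᵥ (Q *ᵥ x) + 2 * (d ⬝ᵥ x)

theorem Phi_add_smul {n : ℕ} (Q : Matrix (Fin n) (Fin n) ℝ) (d x g : Fin n → ℝ) (t : ℝ) :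
    Phi Q d (x + t • g) = Phi Q d x
      + t * (x ⬝ᵥ (Q *ᵥ g) + g ⬝ᵥ (Q *ᵥ x) + 2 * (d ⬝ᵥ g)) + t ^ 2 * (g ⬝ᵥ (Q *ᵥ g)) := by
  simp only [Phi, mulVec_add, mulVec_smul, dotProduct_add, add_dotProduct, dotProduct_smul,
    smul_dotProduct, smul_eq_mul]
  ring

theorem exists_descent_direction {n : ℕ} (Q : Matrix (Fin n) (Fin n) ℝ) (d x g : Fin n → ℝ)
    (hg : g ⬝ᵥ (Q *ᵥ g) ≤ 0) :
    ∃ u, (u = g ∨ u = -g) ∧ ∀ t : ℝ, 0 ≤ t → Phi Q d (x + t • u) ≤ Phi Q d x := by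
  set slope := fun u : Fin n → ℝ => x ⬝ᵥ (Q *ᵥ u) + u ⬝ᵥ (Q *ᵥ x) + 2 * (d ⬝ᵥ u)
  have descent : ∀ u, u ⬝ᵥ (Q *ᵥ u) ≤ 0 → slope u ≤ 0 →
      ∀ t : ℝ, 0 ≤ t → Phi Q d (x + t • u) ≤ Phi Q d x := by
    intro u hcurv hslope t ht
    rw [Phi_add_smul]
    nlinarith [mul_nonpos_of_nonneg_of_nonpos ht hslope,
      mul_nonpos_of_nonneg_of_nonpos (sq_nonneg t) hcurv]
  have slope_neg : slope (-g) = -slope g := by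
    simp only [slope, mulVec_neg, dotProduct_neg, neg_dotProduct]
    ring
  rcases le_total (slope g) 0 with hslope | hslope
  · exact ⟨g, .inl rfl, descent g hg hslope⟩
  · refine ⟨-g, .inr rfl, descent (-g) ?_ (by linarith)⟩
    simpa only [mulVec_neg, dotProduct_neg, neg_dotProduct, neg_neg] using hg

theorem eq_zero_of_isBounded_of_forall_add_smul_mem {E : Type*} [NormedAddCommGroup E]
    [NormedSpace ℝ E] {s : Set E} (hs : Bornology.IsBounded s) {x g : E}
    (hray : ∀ t : ℝ, 0 ≤ t → x + t • g ∈ s) : g = 0 := by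
  by_contra hg
  obtain ⟨C, hC⟩ := isBounded_iff_forall_norm_le.mp hs
  have hgpos : 0 < ‖g‖ := norm_pos_iff.mpr hg
  set t := (C + ‖x‖ + 1) / ‖g‖
  have hC0 : 0 ≤ C := (norm_nonneg x).trans (by simpa using hC _ (hray 0 le_rfl))
  have ht : 0 ≤ t := by positivity
  have htg : ‖t • g‖ = C + ‖x‖ + 1 := by
    rw [norm_smul, Real.norm_of_nonneg ht, div_mul_cancel₀ _ hgpos.ne']
  have := norm_sub_le (x + t • g) x
  rw [add_sub_cancel_left, htg] at this
  linarith [hC _ (hray t ht)]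

theorem exists_max_step {ι : Type*} [Finite ι] (s r : ι → ℝ) (hs : ∀ i, 0 ≤ s i)
    (hr : ∃ j, 0 < r j) :
    ∃ t : ℝ, 0 ≤ t ∧ (∀ i, t * r i ≤ s i) ∧ ∃ j, 0 < r j ∧ t * r j = s j := by
  have : Nonempty {j // 0 < r j} := let ⟨j, hj⟩ := hr; ⟨⟨j, hj⟩⟩
  obtain ⟨⟨j, hj⟩, hmin⟩ := Finite.exists_min fun k : {j // 0 < r j} => s k / r k
  refine ⟨s j / r j, div_nonneg (hs j) hj.le, fun i => ?_, j, hj, div_mul_cancel₀ _ hj.ne'⟩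
  rcases le_or_gt (r i) 0 with hri | hri
  · linarith [hs i, mul_nonpos_of_nonneg_of_nonpos (div_nonneg (hs j) hj.le) hri]
  · exact (le_div_iff₀ hri).mp (hmin ⟨i, hri⟩)

section Polyhedron

variable {ι κ : Type*} [Fintype κ] (A : Matrix ι κ ℝ) (b : ι → ℝ)

def activeSet (x : κ → ℝ) : Set ι := {i | (A *ᵥ x) i = b i}

theorem exists_pos_mulVec_of_isBounded (hF : Bornology.IsBounded {x | A *ᵥ x ≤ b})
    {x g : κ → ℝ} (hx : A *ᵥ x ≤ b) (hg : g ≠ 0) : ∃ j, 0 < (A *ᵥ g) j := by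
  by_contra! hrec
  refine hg (eq_zero_of_isBounded_of_forall_add_smul_mem hF (x := x) fun t ht i => ?_)
  simp only [mulVec_add, mulVec_smul, Pi.add_apply, Pi.smul_apply, smul_eq_mul]
  nlinarith [hx i, hrec i]

theorem exists_step_to_new_active [Finite ι] {x g : κ → ℝ} (hx : A *ᵥ x ≤ b)
    (hg : ∃ j, 0 < (A *ᵥ g) j) :
    ∃ t : ℝ, 0 ≤ t ∧ A *ᵥ (x + t • g) ≤ b ∧
      ∃ j, 0 < (A *ᵥ g) j ∧ j ∈ activeSet A b (x + t • g) := by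
  obtain ⟨t, ht, hle, j, hj, hjeq⟩ :=
    exists_max_step (b - A *ᵥ x) (A *ᵥ g) (fun i => sub_nonneg.mpr (hx i)) hg
  have hstep : ∀ i, (A *ᵥ (x + t • g)) i = (A *ᵥ x) i + t * (A *ᵥ g) i := by
    simp [mulVec_add, mulVec_smul]
  refine ⟨t, ht, fun i => ?_, j, hj, ?_⟩
  · linarith [hle i, hstep i, Pi.sub_apply b (A *ᵥ x) i]
  · simp only [activeSet, Set.mem_ofPred_eq, hstep, hjeq, Pi.sub_apply]
    ring

theorem activeSet_ssubset_add_smul {x g : κ → ℝ} (t : ℝ)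
    (hact : ∀ i ∈ activeSet A b x, (A *ᵥ g) i = 0) {j : ι} (hj : 0 < (A *ᵥ g) j)
    (hjact : j ∈ activeSet A b (x + t • g)) :
    activeSet A b x ⊂ activeSet A b (x + t • g) := by
  have hstay : ∀ i ∈ activeSet A b x, (A *ᵥ (x + t • g)) i = (A *ᵥ x) i := fun i hi => by
    simp [mulVec_add, mulVec_smul, hact i hi]
  refine Set.ssubset_iff_subset_ne.mpr ⟨fun i hi => (hstay i hi).trans hi, fun heq => ?_⟩
  exact hj.ne' (hact j (heq ▸ hjact))

end Polyhedron

theorem exists_descent_enlarging_active_set_general {n m : ℕ}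
    (Q : Matrix (Fin n) (Fin n) ℝ)
    (d : Fin n → ℝ) (A : Matrix (Fin m) (Fin n) ℝ) (b : Fin m → ℝ)
    (hbdd : Bornology.IsBounded {x : Fin n → ℝ | A *ᵥ x ≤ b})
    (xhat : Fin n → ℝ) (hxhat : A *ᵥ xhat ≤ b)
    (hnpd : ∃ h : Fin n → ℝ, h ≠ 0 ∧
      (∀ i : Fin m, (A *ᵥ xhat) i = b i → (A *ᵥ h) i = 0) ∧ h ⬝ᵥ (Q *ᵥ h) ≤ 0) :
    ∃ xbar : Fin n → ℝ, A *ᵥ xbar ≤ b ∧ Phi Q d xbar ≤ Phi Q d xhat ∧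
      {i : Fin m | (A *ᵥ xhat) i = b i} ⊂ {i : Fin m | (A *ᵥ xbar) i = b i} := by
  obtain ⟨h, hh, hhact, hcurv⟩ := hnpd
  obtain ⟨g, hgh, hdesc⟩ := exists_descent_direction Q d xhat h hcurv
  have hg : g ≠ 0 ∧ ∀ i ∈ activeSet A b xhat, (A *ᵥ g) i = 0 := by
    rcases hgh with rfl | rfl
    · exact ⟨hh, hhact⟩
    · exact ⟨neg_ne_zero.mpr hh, fun i hi => by simp [mulVec_neg, hhact i hi]⟩
  obtain ⟨t, ht, hfeas, j, hj, hjact⟩ :=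
    exists_step_to_new_active A b hxhat (exists_pos_mulVec_of_isBounded A b hbdd hxhat hg.1)
  exact ⟨xhat + t • g, hfeas, hdesc t ht, activeSet_ssubset_add_smul A b t hg.2 hj hjact⟩

/-- Lemma `l:no vertex no pd`. Suppose `F = {x : Ax ≤ b}` is
bounded and `x̂ ∈ F`. If `Q` is not positive definite on the null space of the
active constraints at `x̂` (there is a nonzero `h` with `a_iᵀh = 0` for all active
`i` and `hᵀQh ≤ 0`), then there is `x̄ ∈ F` with `Φ(x̄) ≤ Φ(x̂)` whose active set
strictly contains that of `x̂`. -/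
theorem exists_descent_enlarging_active_set {n m : ℕ}
    (Q : Matrix (Fin n) (Fin n) ℝ) (hQ : Q.IsSymm)
    (d : Fin n → ℝ) (A : Matrix (Fin m) (Fin n) ℝ) (b : Fin m → ℝ)
    (hbdd : Bornology.IsBounded {x : Fin n → ℝ | A *ᵥ x ≤ b})
    (xhat : Fin n → ℝ) (hxhat : A *ᵥ xhat ≤ b)
    (hnpd : ∃ h : Fin n → ℝ, h ≠ 0 ∧
      (∀ i : Fin m, (A *ᵥ xhat) i = b i → (A *ᵥ h) i = 0) ∧ h ⬝ᵥ (Q *ᵥ h) ≤ 0) :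
    ∃ xbar : Fin n → ℝ, A *ᵥ xbar ≤ b ∧ Phi Q d xbar ≤ Phi Q d xhat ∧
      {i : Fin m | (A *ᵥ xhat) i = b i} ⊂ {i : Fin m | (A *ᵥ xbar) i = b i} :=
  exists_descent_enlarging_active_set_general Q d A b hbdd xhat hxhat hnpd
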